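/- For all t > 0 and k > 0, the Wronskian of the mode function and its complex conjugate satisfies v(t,k)·∂(conj v)/∂t(t,k) − conj(v(t,k))·∂v/∂t(t,k) = −(4i/π)·t²; in particular it is independent of k. -/

import Mathlib

open Complex MeasureTheory Filter
open scoped RealInnerProductSpace

noncomputable section

/-- Three-dimensional Euclidean space. -/
abbrev V3 : Type := EuclideanSpace ℝ (Fin 3)

/-- The Bessel function of complex order `α`:
`J_α(x) = Σ_{n=0}^∞ ((−1)^n/(n!·Γ(α+n+1)))·exp((α+2n)·log(x/2))`. -/
def besselJ (α : ℂ) (x : ℝ) : ℂ :=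
  ∑' n : ℕ, ((-1 : ℂ) ^ n / ((n.factorial : ℂ) * Complex.Gamma (α + (n : ℂ) + 1))) *
    Complex.exp ((α + 2 * (n : ℂ)) * (Real.log (x / 2) : ℂ))

/-- The Hankel function of the first kind. -/
def hankel1 (α : ℂ) (x : ℝ) : ℂ :=
  (besselJ (-α) x - Complex.exp (-(Complex.I * (Real.pi : ℂ) * α)) * besselJ α x) /
    (Complex.I * Complex.sin (α * (Real.pi : ℂ)))

/-- The Hankel function of the second kind. -/
def hankel2 (α : ℂ) (x : ℝ) : ℂ :=
  (Complex.exp (Complex.I * (Real.pi : ℂ) * α) * besselJ α x - besselJ (-α) x) /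
    (Complex.I * Complex.sin (α * (Real.pi : ℂ)))

/-- `μ = √((mR)² − 9/4)`. -/
def modeMu (m R : ℝ) : ℝ := Real.sqrt ((m * R) ^ 2 - 9 / 4)

/-- `ν = iμ`. -/
def modeNu (m R : ℝ) : ℂ := Complex.I * (modeMu m R : ℂ)

/-- The mode function `v(t,k) = e^{−μπ/2}·t^{3/2}·H^{(1)}_ν(kt)`. -/
def modeV (m R t k : ℝ) : ℂ :=
  (Real.exp (-(modeMu m R * Real.pi / 2)) : ℂ) * ((t ^ ((3 : ℝ) / 2) : ℝ) : ℂ) *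
    hankel1 (modeNu m R) (k * t)

/-- `v′(t,k) = ∂v/∂t (t,k)`. -/
def modeV' (m R t k : ℝ) : ℂ := deriv (fun s => modeV m R s k) t

/-- `ω(k) = √(1+k²)`. -/
def omegaK (k : ℝ) : ℝ := Real.sqrt (1 + k ^ 2)

/-- The Fourier transform on `ℝ³`. -/
def ft (g : V3 → ℂ) (k : V3) : ℂ :=
  (((2 * Real.pi) ^ (-(3 : ℝ) / 2) : ℝ) : ℂ) *
    ∫ x : V3, Complex.exp (-(Complex.I) * (⟪k, x⟫ : ℂ)) * g x

/-- The inverse Fourier transform on `ℝ³`. -/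
def ift (g : V3 → ℂ) (x : V3) : ℂ :=
  (((2 * Real.pi) ^ (-(3 : ℝ) / 2) : ℝ) : ℂ) *
    ∫ k : V3, Complex.exp (Complex.I * (⟪k, x⟫ : ℂ)) * g k

/-- The map `K_t` on the Fourier side, applied to the Fourier transforms `f̃, h̃`
of the Cauchy data:
`K_t(f,h)(k) = (πi/(4t³))·[t·f̃(k)·conj(v′(t,|k|)) − R·h̃(k)·conj(v(t,|k|))]`. -/
def ktAux (m R t : ℝ) (ftil htil : V3 → ℂ) (k : V3) : ℂ :=
  ((Real.pi : ℂ) * Complex.I / (4 * (t : ℂ) ^ 3)) *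
    ((t : ℂ) * ftil k * (starRingEnd ℂ) (modeV' m R t ‖k‖) -
      (R : ℂ) * htil k * (starRingEnd ℂ) (modeV m R t ‖k‖))

/-- `K_t` applied to real Cauchy data `(f,h)`. -/
def ktFun (m R t : ℝ) (f h : V3 → ℝ) : V3 → ℂ :=
  ktAux m R t (ft fun x => (f x : ℂ)) (ft fun x => (h x : ℂ))

/-- The Fourier transform of the first component of the pair `L_tψ`:
`f̃_t(k) = v(t,|k|)·ψ(k) + conj(v(t,|k|))·conj(ψ(−k))`. -/
def ltF (m R t : ℝ) (ψ : V3 → ℂ) (k : V3) : ℂ :=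
  modeV m R t ‖k‖ * ψ k + (starRingEnd ℂ) (modeV m R t ‖k‖) * (starRingEnd ℂ) (ψ (-k))

/-- The Fourier transform of the second component of the pair `L_tψ`:
`h̃_t(k) = (t/R)·[v′(t,|k|)·ψ(k) + conj(v′(t,|k|))·conj(ψ(−k))]`. -/
def ltH (m R t : ℝ) (ψ : V3 → ℂ) (k : V3) : ℂ :=
  ((t / R : ℝ) : ℂ) *
    (modeV' m R t ‖k‖ * ψ k + (starRingEnd ℂ) (modeV' m R t ‖k‖) * (starRingEnd ℂ) (ψ (-k)))

/-- The solution `u(t,x⃗)` built from the coefficient function `ψ`: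
`u(t,x⃗) = (2π)^{−3/2}·∫ e^{ik⃗·x⃗}·[v(t,|k⃗|)·ψ(k⃗) + conj(v(t,|k⃗|))·conj(ψ(−k⃗))] dk⃗`. -/
def uSol (m R : ℝ) (ψ : V3 → ℂ) (t : ℝ) (x : V3) : ℂ :=
  (((2 * Real.pi) ^ (-(3 : ℝ) / 2) : ℝ) : ℂ) *
    ∫ k : V3, Complex.exp (Complex.I * (⟪k, x⟫ : ℂ)) *
      (modeV m R t ‖k‖ * ψ k + (starRingEnd ℂ) (modeV m R t ‖k‖) * (starRingEnd ℂ) (ψ (-k)))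

/-- The spatial Laplacian, as the sum of the second partial derivatives along
the coordinate directions. -/
def lap3 (w : V3 → ℂ) (x : V3) : ℂ :=
  ∑ i : Fin 3, iteratedDeriv 2 (fun s : ℝ => w (x + s • EuclideanSpace.single i (1 : ℝ))) 0

/-- The square of the Sobolev-type norm `‖(f,h)‖_{1/2}`, expressed in terms of the
Fourier transforms `f̃, h̃` of the data:
`‖(f,h)‖_{1/2}² = ∫ ω(|k⃗|)·|f̃(k⃗)|² dk⃗ + ∫ ω(|k⃗|)⁻¹·|h̃(k⃗)|² dk⃗`. -/
def halfNormSq (ftil htil : V3 → ℂ) : ℝ :=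
  (∫ k : V3, omegaK ‖k‖ * ‖ftil k‖ ^ 2) + ∫ k : V3, (omegaK ‖k‖)⁻¹ * ‖htil k‖ ^ 2

/-- The Sobolev-type norm `‖(f,h)‖_{1/2}` (arguments are the Fourier transforms). -/
def halfNorm (ftil htil : V3 → ℂ) : ℝ := Real.sqrt (halfNormSq ftil htil)

/-- The `L²(ℝ³)` norm. -/
def l2Norm (g : V3 → ℂ) : ℝ := Real.sqrt (∫ k : V3, ‖g k‖ ^ 2)

/-- The transformed potential operator `V̂` with (Fourier-transformed) potential `W`:
`(V̂ψ)(k⃗) = −(2π)^{3/2}·R·(πi/4)·conj(v(1,|k⃗|))·(W ∗ g_ψ)(k⃗)` where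
`g_ψ(k⃗) = v(1,|k⃗|)·ψ(k⃗) + conj(v(1,|k⃗|))·conj(ψ(−k⃗))`. -/
def vHatOp (m R : ℝ) (W : V3 → ℂ) (ψ : V3 → ℂ) (k : V3) : ℂ :=
  ((-((2 * Real.pi) ^ ((3 : ℝ) / 2)) * R : ℝ) : ℂ) * ((Real.pi : ℂ) * Complex.I / 4) *
    (starRingEnd ℂ) (modeV m R 1 ‖k‖) * ∫ y : V3, W y * ltF m R 1 ψ (k - y)

/-- The free transformed evolution `Û₀(a,b) = K₁ ∘ L_a ∘ K_b ∘ L₁` on `L²(ℝ³)`. -/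
def u0Hat (m R a b : ℝ) (ψ : V3 → ℂ) : V3 → ℂ :=
  ktAux m R 1 (ltF m R a (ktAux m R b (ltF m R 1 ψ) (ltH m R 1 ψ)))
    (ltH m R a (ktAux m R b (ltF m R 1 ψ) (ltH m R 1 ψ)))

/-- The inner chain `V̂(s)·V̂(s₂)···V̂(s_{j+1})·Û₀(s_{j+1},1)ψ` of the `n`-th Dyson term,
with the nested integrals `∫₁^{s}···` built in; `W s` is the spatial Fourier transform
of the potential at time `s`. -/
def dysonM (m R : ℝ) (W : ℝ → V3 → ℂ) : ℕ → ℝ → (V3 → ℂ) → V3 → ℂ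
  | 0, s, ψ => vHatOp m R (W s) (u0Hat m R s 1 ψ)
  | j + 1, s, ψ => vHatOp m R (W s) fun k => ∫ r in Set.Ioc (1 : ℝ) s, dysonM m R W j r ψ k

/-- The `n`-th Dyson term
`∫₁^t∫₁^{s₁}···∫₁^{s_{n−1}} Û₀(t,s₁)·V̂(s₁)···V̂(s_n)·Û₀(s_n,1)ψ ds_n···ds₁` (for `n ≥ 1`). -/
def dysonT (m R : ℝ) (W : ℝ → V3 → ℂ) (n : ℕ) (t : ℝ) (ψ : V3 → ℂ) : V3 → ℂ := fun k =>
  ∫ s in Set.Ioc (1 : ℝ) t, u0Hat m R t s (dysonM m R W (n - 1) s ψ) k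

/-!
Differentiating the series of `J_α` termwise gives `x J_α'(x) = ∑ (α + 2n) · (n-th term)`, so by
the Cauchy product `x · W(J_α, J_{-α})(x)` is a power series in `(x/2)²`. Its coefficients of
positive degree telescope, because `1/Γ(s) = s/Γ(s+1)` holds for every `s` (also at the poles),
and the constant term is `-2α/(Γ(1+α)Γ(1-α)) = -2 sin(πα)/π` by the reflection formula.

For `ν = iμ`, `conj J_ν = J_{-ν}`, so `H⁽¹⁾_ν` and its conjugate are combinations of `J_{±ν}` with
coefficients built from `e^{πμ}` and `sinh(πμ)`; bilinearity then gives
`x · W(H⁽¹⁾_ν, conj H⁽¹⁾_ν)(x) = -4i e^{πμ}/π`. The mode function is this Hankel function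
rescaled to `x = kt` and multiplied by the real factor `e^{-μπ/2} t^{3/2}`, which multiplies the
Wronskian by `k · e^{-πμ} t³`.
-/

open scoped Nat ComplexConjugate Real
open Set Finset

def besselCoeff (α : ℂ) (n : ℕ) : ℂ := (-1) ^ n / (n ! * Gamma (α + n + 1))

def besselTerm (α : ℂ) (n : ℕ) (x : ℝ) : ℂ :=
  besselCoeff α n * exp ((α + 2 * n) * Real.log (x / 2))

theorem besselJ_eq_tsum (α : ℂ) (x : ℝ) : besselJ α x = ∑' n, besselTerm α n x := rfl

theorem besselCoeff_eq_inv_Gamma (α : ℂ) (n : ℕ) :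
    besselCoeff α n = (-1) ^ n * (Gamma (n + 1))⁻¹ * (Gamma (α + n + 1))⁻¹ := by
  rw [besselCoeff, ← Gamma_nat_eq_factorial, div_eq_mul_inv, mul_inv, mul_assoc]

section Coefficients

variable {α : ℂ}

theorem norm_inv_Gamma_add_nat_le (hα : α.im ≠ 0) (n : ℕ) :
    ‖(Gamma (α + n + 1))⁻¹‖ ≤ ‖(Gamma (α + 1))⁻¹‖ * |α.im|⁻¹ ^ n := by
  induction n with
  | zero => simp
  | succ n ih =>
    have him : |α.im| ≤ ‖α + n + 1‖ := by simpa using abs_im_le_norm (α + n + 1)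
    have hrec := one_div_Gamma_eq_self_mul_one_div_Gamma_add_one (α + n + 1)
    rw [pow_succ, ← mul_assoc, ← div_eq_mul_inv, le_div_iff₀ (abs_pos.mpr hα)]
    calc ‖(Gamma (α + ↑(n + 1) + 1))⁻¹‖ * |α.im|
        ≤ ‖α + n + 1‖ * ‖(Gamma (α + n + 1 + 1))⁻¹‖ := by
          push_cast; rw [mul_comm, ← add_assoc]; gcongr
      _ = ‖(Gamma (α + n + 1))⁻¹‖ := by rw [hrec, norm_mul]
      _ ≤ _ := ih

theorem norm_besselCoeff_le (hα : α.im ≠ 0) (n : ℕ) :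
    ‖besselCoeff α n‖ ≤ ‖(Gamma (α + 1))⁻¹‖ * |α.im|⁻¹ ^ n / n ! := by
  have hnorm : ‖besselCoeff α n‖ = ‖(Gamma (α + n + 1))⁻¹‖ / n ! := by
    simp [besselCoeff, div_eq_mul_inv, mul_comm]
  rw [hnorm]
  gcongr
  exact norm_inv_Gamma_add_nat_le hα n

end Coefficients

theorem summable_add_mul_mul_pow_div_factorial (a b r : ℝ) :
    Summable fun n : ℕ => (a + b * n) * r ^ n / n ! := by
  have hn : Summable fun n : ℕ => n * r ^ n / n ! := by
    refine (summable_nat_add_iff 1).mp (((Real.summable_pow_div_factorial r).mul_left r).congr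
      fun n => ?_)
    rw [Nat.factorial_succ]
    push_cast
    field_simp
    ring
  refine (((Real.summable_pow_div_factorial r).mul_left a).add (hn.mul_left b)).congr fun n => ?_
  ring

section Series

variable {α : ℂ} {x : ℝ}

theorem besselTerm_eq_mul_pow (n : ℕ) (hx : 0 < x) :
    besselTerm α n x = besselCoeff α n * exp (α * Real.log (x / 2)) * (((x / 2) ^ 2) ^ n : ℝ) := by
  have hexp : exp (Real.log (x / 2)) = ((x / 2 : ℝ) : ℂ) := by
    rw [← ofReal_exp, Real.exp_log (by positivity)]
  have hpow : exp (2 * n * Real.log (x / 2)) = (((x / 2) ^ 2) ^ n : ℝ) := by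
    rw [show (2 * n * Real.log (x / 2) : ℂ) = ((2 * n : ℕ) : ℂ) * Real.log (x / 2) by
      push_cast; ring, exp_nat_mul, hexp, pow_mul]
    push_cast
    ring
  rw [besselTerm, add_mul, exp_add, hpow, mul_assoc]

theorem norm_besselTerm_le (hα : α.im ≠ 0) (hx : 0 < x) (n : ℕ) :
    ‖besselTerm α n x‖ ≤ ‖(Gamma (α + 1))⁻¹‖ * ‖exp (α * Real.log (x / 2))‖ *
      (((x / 2) ^ 2 * |α.im|⁻¹) ^ n / n !) := by
  rw [besselTerm_eq_mul_pow n hx, norm_mul, norm_mul, norm_real,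
    Real.norm_of_nonneg (by positivity)]
  calc ‖besselCoeff α n‖ * ‖exp (α * Real.log (x / 2))‖ * ((x / 2) ^ 2) ^ n
      ≤ ‖(Gamma (α + 1))⁻¹‖ * |α.im|⁻¹ ^ n / n ! * ‖exp (α * Real.log (x / 2))‖ *
          ((x / 2) ^ 2) ^ n := by
        gcongr
        exact norm_besselCoeff_le hα n
    _ = _ := by rw [mul_pow]; ring

theorem norm_mul_besselTerm_le (hα : α.im ≠ 0) (hx : 0 < x) (n : ℕ) :
    ‖(α + 2 * n) * besselTerm α n x‖ ≤ ‖(Gamma (α + 1))⁻¹‖ * ‖exp (α * Real.log (x / 2))‖ *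
      ((‖α‖ + 2 * n) * ((x / 2) ^ 2 * |α.im|⁻¹) ^ n / n !) := by
  have hα2n : ‖α + 2 * n‖ ≤ ‖α‖ + 2 * n := by
    refine (norm_add_le _ _).trans_eq ?_
    simp
  rw [norm_mul, mul_div_assoc, mul_left_comm]
  exact mul_le_mul hα2n (norm_besselTerm_le hα hx n) (norm_nonneg _) (by positivity)

theorem summable_norm_besselTerm (hα : α.im ≠ 0) (hx : 0 < x) :
    Summable fun n => ‖besselTerm α n x‖ :=
  .of_nonneg_of_le (fun _ => norm_nonneg _) (norm_besselTerm_le hα hx)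
    ((Real.summable_pow_div_factorial _).mul_left _)

theorem summable_norm_mul_besselTerm (hα : α.im ≠ 0) (hx : 0 < x) :
    Summable fun n : ℕ => ‖(α + 2 * n) * besselTerm α n x‖ :=
  .of_nonneg_of_le (fun _ => norm_nonneg _) (norm_mul_besselTerm_le hα hx)
    ((summable_add_mul_mul_pow_div_factorial _ _ _).mul_left _)

theorem hasDerivAt_besselTerm (n : ℕ) (hx : x ≠ 0) :
    HasDerivAt (besselTerm α n) ((α + 2 * n) * besselTerm α n x / x) x := by
  have hlog : HasDerivAt (fun y => Real.log (y / 2)) x⁻¹ x := by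
    convert ((hasDerivAt_id' x).div_const 2).log (by simpa using hx) using 1
    field_simp
  refine (((hlog.ofReal_comp.const_mul (α + 2 * n)).cexp).const_mul
    (besselCoeff α n)).congr_deriv ?_
  rw [besselTerm]
  push_cast
  ring

theorem hasDerivAt_besselJ (hα : α.im ≠ 0) (hx : 0 < x) :
    HasDerivAt (besselJ α) ((∑' n : ℕ, (α + 2 * n) * besselTerm α n x) / x) x := by
  obtain ⟨M, hM⟩ : ∃ M, ∀ s ∈ Icc (x / 2) (2 * x), ‖exp (α * Real.log (s / 2))‖ ≤ M := by
    refine isCompact_Icc.exists_bound_of_continuousOn fun s hs => ?_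
    have hs : s / 2 ≠ 0 := by linarith [hs.1]
    fun_prop (disch := exact hs)
  have hM0 : 0 ≤ M := (norm_nonneg _).trans (hM x ⟨by linarith, by linarith⟩)
  have hxt : x ∈ Ioo (x / 2) (2 * x) := ⟨by linarith, by linarith⟩
  set r := x ^ 2 * |α.im|⁻¹
  have hbound : ∀ n : ℕ, ∀ s ∈ Ioo (x / 2) (2 * x), ‖(α + 2 * n) * besselTerm α n s / s‖ ≤
      2 / x * ‖(Gamma (α + 1))⁻¹‖ * M * ((‖α‖ + 2 * n) * r ^ n / n !) := by
    intro n s ⟨hs1, hs2⟩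
    have hs : 0 < s := by linarith
    have hsr : (s / 2) ^ 2 * |α.im|⁻¹ ≤ x ^ 2 * |α.im|⁻¹ := by
      gcongr
      linarith
    rw [norm_div, norm_real, Real.norm_of_nonneg hs.le, div_le_iff₀ hs]
    calc ‖(α + 2 * n) * besselTerm α n s‖
        ≤ ‖(Gamma (α + 1))⁻¹‖ * ‖exp (α * Real.log (s / 2))‖ *
          ((‖α‖ + 2 * n) * ((s / 2) ^ 2 * |α.im|⁻¹) ^ n / n !) := norm_mul_besselTerm_le hα hs n
      _ ≤ ‖(Gamma (α + 1))⁻¹‖ * M * ((‖α‖ + 2 * n) * r ^ n / n !) := by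
        gcongr
        exact hM s ⟨hs1.le, hs2.le⟩
      _ ≤ (2 * s / x) * (‖(Gamma (α + 1))⁻¹‖ * M * ((‖α‖ + 2 * n) * r ^ n / n !)) :=
        le_mul_of_one_le_left (by positivity) (by rw [le_div_iff₀ hx]; linarith)
      _ = _ := by ring
  rw [← tsum_div_const]
  exact hasDerivAt_tsum_of_isPreconnected
    ((summable_add_mul_mul_pow_div_factorial _ _ _).mul_left _) isOpen_Ioo isPreconnected_Ioo
    (fun n s hs => hasDerivAt_besselTerm n (by linarith [hs.1] : 0 < s).ne') hbound hxt
    (summable_norm_besselTerm hα hx).of_norm hxt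

end Series

theorem inv_Gamma_eq_mul_inv_Gamma (s t : ℂ) (h : t = s + 1) :
    (Gamma s)⁻¹ = s * (Gamma t)⁻¹ := by
  rw [h, one_div_Gamma_eq_self_mul_one_div_Gamma_add_one]

theorem sum_antidiagonal_besselCoeff_mul_eq_zero (α : ℂ) {N : ℕ} (hN : N ≠ 0) :
    ∑ p ∈ antidiagonal N,
      besselCoeff α p.1 * besselCoeff (-α) p.2 * (2 * p.2 - 2 * p.1 - 2 * α) = 0 := by
  -- `N` times the `n`-th summand is `2 (u (n + 1) - u n)`, and `u` vanishes at `0` and `N + 1`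
  -- because `Gamma 0 = 0`.
  set u : ℕ → ℂ := fun j => (-1) ^ N * (Gamma j)⁻¹ * (Gamma (N - j + 1))⁻¹ *
    (Gamma (α + j))⁻¹ * (Gamma (N - j + 1 - α))⁻¹ with hu
  have key : ∀ n ∈ range (N + 1), (N : ℂ) * (besselCoeff α n * besselCoeff (-α) (N - n) *
      (2 * (N - n : ℕ) - 2 * n - 2 * α)) = 2 * (u (n + 1) - u n) := by
    intro n hn
    obtain ⟨m, rfl⟩ := Nat.exists_eq_add_of_le (Nat.lt_succ_iff.mp (mem_range.mp hn))
    simp only [hu, besselCoeff_eq_inv_Gamma, Nat.add_sub_cancel_left]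
    rw [show ((n + m : ℕ) : ℂ) - (n + 1 : ℕ) + 1 = m by push_cast; ring,
      show ((n + m : ℕ) : ℂ) - n + 1 = m + 1 by push_cast; ring,
      show ((n + 1 : ℕ) : ℂ) = n + 1 by push_cast; ring,
      inv_Gamma_eq_mul_inv_Gamma (n : ℂ) (n + 1) rfl,
      inv_Gamma_eq_mul_inv_Gamma (m : ℂ) (m + 1) rfl,
      inv_Gamma_eq_mul_inv_Gamma (α + n) (α + n + 1) rfl,
      inv_Gamma_eq_mul_inv_Gamma ((m : ℂ) - α) (-α + m + 1) (by ring),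
      show (α + (n + 1) : ℂ) = α + n + 1 by ring, show ((m : ℂ) + 1 - α) = -α + m + 1 by ring,
      pow_add]
    push_cast
    ring
  have hu0 : u 0 = 0 := by simp [hu, Gamma_zero]
  have huN : u (N + 1) = 0 := by
    simp only [hu]
    push_cast
    rw [show (N - (N + 1) + 1 : ℂ) = 0 by ring, Gamma_zero, inv_zero]
    ring
  have hsum := sum_congr rfl key
  rw [← mul_sum, ← mul_sum, sum_range_sub, hu0, huN, sub_zero, mul_zero, mul_eq_zero] at hsum
  rw [Nat.sum_antidiagonal_eq_sum_range_succ_mk]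
  exact hsum.resolve_left (Nat.cast_ne_zero.mpr hN)

theorem besselCoeff_zero_mul_besselCoeff_zero (α : ℂ) :
    besselCoeff α 0 * besselCoeff (-α) 0 * (-2 * α) = -2 * sin (π * α) / π := by
  have hrefl : (Gamma α)⁻¹ * (Gamma (1 - α))⁻¹ = sin (π * α) / π := by
    rw [← mul_inv, Gamma_mul_Gamma_one_sub, inv_div]
  rw [inv_Gamma_eq_mul_inv_Gamma α (α + 1) rfl] at hrefl
  simp only [besselCoeff_eq_inv_Gamma, pow_zero, Nat.cast_zero, zero_add, Gamma_one, inv_one,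
    one_mul, add_zero, show -α + 1 = 1 - α by ring]
  linear_combination (-2) * hrefl

theorem besselTerm_mul_besselTerm_neg (α : ℂ) (i j : ℕ) (x : ℝ) :
    besselTerm α i x * besselTerm (-α) j x =
      besselCoeff α i * besselCoeff (-α) j * exp (2 * (i + j : ℕ) * Real.log (x / 2)) := by
  rw [besselTerm, besselTerm, mul_mul_mul_comm, ← exp_add]
  push_cast
  ring_nf

theorem tsum_besselTerm_wronskian {α : ℂ} {x : ℝ} (hα : α.im ≠ 0) (hx : 0 < x) :
    (∑' n, besselTerm α n x) * (∑' n : ℕ, (-α + 2 * n) * besselTerm (-α) n x) -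
      (∑' n : ℕ, (α + 2 * n) * besselTerm α n x) * (∑' n, besselTerm (-α) n x) =
      -2 * sin (π * α) / π := by
  have hα' : (-α).im ≠ 0 := by simpa using hα
  have h₁ := summable_norm_besselTerm hα hx
  have h₂ := summable_norm_mul_besselTerm hα' hx
  have h₃ := summable_norm_mul_besselTerm hα hx
  have h₄ := summable_norm_besselTerm hα' hx
  rw [tsum_mul_tsum_eq_tsum_sum_antidiagonal_of_summable_norm h₁ h₂,
    tsum_mul_tsum_eq_tsum_sum_antidiagonal_of_summable_norm h₃ h₄,
    ← Summable.tsum_sub (summable_norm_sum_mul_antidiagonal_of_summable_norm h₁ h₂).of_norm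
      (summable_norm_sum_mul_antidiagonal_of_summable_norm h₃ h₄).of_norm]
  have hterm (N : ℕ) :
      ∑ p ∈ antidiagonal N, besselTerm α p.1 x * ((-α + 2 * p.2) * besselTerm (-α) p.2 x) -
        ∑ p ∈ antidiagonal N, (α + 2 * p.1) * besselTerm α p.1 x * besselTerm (-α) p.2 x =
      exp (2 * N * Real.log (x / 2)) * ∑ p ∈ antidiagonal N,
        besselCoeff α p.1 * besselCoeff (-α) p.2 * (2 * p.2 - 2 * p.1 - 2 * α) := by
    rw [← sum_sub_distrib, mul_sum]
    refine sum_congr rfl fun p hp => ?_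
    calc _ = besselTerm α p.1 x * besselTerm (-α) p.2 x * (2 * p.2 - 2 * p.1 - 2 * α) := by ring
      _ = _ := by rw [besselTerm_mul_besselTerm_neg, mem_antidiagonal.mp hp]; ring
  rw [tsum_congr hterm, tsum_eq_single 0 fun N hN => by
      rw [sum_antidiagonal_besselCoeff_mul_eq_zero α hN, mul_zero],
    ← besselCoeff_zero_mul_besselCoeff_zero]
  simp

def wronskian (f g : ℝ → ℂ) (x : ℝ) : ℂ := f x * deriv g x - g x * deriv f x

section Wronskian

variable {f g : ℝ → ℂ} {x : ℝ}

theorem wronskian_mul_left {c : ℝ → ℂ} (hc : DifferentiableAt ℝ c x)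
    (hf : DifferentiableAt ℝ f x) (hg : DifferentiableAt ℝ g x) :
    wronskian (fun y => c y * f y) (fun y => c y * g y) x = c x ^ 2 * wronskian f g x := by
  rw [wronskian, wronskian, (hc.hasDerivAt.fun_mul hf.hasDerivAt).deriv,
    (hc.hasDerivAt.fun_mul hg.hasDerivAt).deriv]
  ring

theorem wronskian_comp_mul_left (f g : ℝ → ℂ) (k x : ℝ) :
    wronskian (fun y => f (k * y)) (fun y => g (k * y)) x = k * wronskian f g (k * x) := by
  simp only [wronskian, deriv_comp_mul_left, real_smul]
  ring

theorem wronskian_mul_add_mul (hf : DifferentiableAt ℝ f x) (hg : DifferentiableAt ℝ g x)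
    (a b c d : ℂ) :
    wronskian (fun y => a * f y + b * g y) (fun y => c * f y + d * g y) x =
      (a * d - b * c) * wronskian f g x := by
  have hderiv (p q : ℂ) : deriv (fun y => p * f y + q * g y) x = p * deriv f x + q * deriv g x :=
    ((hf.hasDerivAt.const_mul p).add (hg.hasDerivAt.const_mul q)).deriv
  simp only [wronskian, hderiv]
  ring

end Wronskian

theorem wronskian_besselJ {α : ℂ} {x : ℝ} (hα : α.im ≠ 0) (hx : 0 < x) :
    x * wronskian (besselJ α) (besselJ (-α)) x = -2 * sin (π * α) / π := by
  have hα' : (-α).im ≠ 0 := by simpa using hα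
  rw [wronskian, (hasDerivAt_besselJ hα hx).deriv, (hasDerivAt_besselJ hα' hx).deriv,
    besselJ_eq_tsum, besselJ_eq_tsum, ← tsum_besselTerm_wronskian hα hx]
  have hx' : (x : ℂ) ≠ 0 := ofReal_ne_zero.mpr hx.ne'
  field_simp

theorem besselJ_conj (α : ℂ) (x : ℝ) : conj (besselJ α x) = besselJ (conj α) x := by
  rw [besselJ_eq_tsum, besselJ_eq_tsum, conj_tsum]
  congr 1
  funext n
  simp [besselTerm, besselCoeff, ← Gamma_conj, ← exp_conj, map_ofNat]

theorem conj_hankel1 {ν : ℂ} (hν : ν.re = 0) (x : ℝ) :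
    conj (hankel1 ν x) =
      (besselJ ν x - exp (-(I * π * ν)) * besselJ (-ν) x) / (I * sin (ν * π)) := by
  have hνconj : conj ν = -ν := Complex.ext (by simp [hν]) (by simp)
  simp only [hankel1, map_div₀, map_sub, map_mul, map_neg, besselJ_conj, hνconj, neg_neg,
    ← exp_conj, ← sin_conj, conj_I, conj_ofReal, neg_mul, mul_neg, sin_neg]

theorem differentiableAt_hankel1 {ν : ℂ} {x : ℝ} (hν : ν.im ≠ 0) (hx : 0 < x) :
    DifferentiableAt ℝ (hankel1 ν) x := by
  have h₁ := (hasDerivAt_besselJ hν hx).differentiableAt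
  have h₂ := (hasDerivAt_besselJ (α := -ν) (by simpa using hν) hx).differentiableAt
  unfold hankel1
  fun_prop

theorem wronskian_hankel1_conj_of_re_eq_zero {ν : ℂ} (hre : ν.re = 0) (him : ν.im ≠ 0) {x : ℝ}
    (hx : 0 < x) :
    x * wronskian (hankel1 ν) (fun y => conj (hankel1 ν y)) x =
      (1 - exp (-(I * π * ν)) ^ 2) / (I * sin (ν * π)) ^ 2 * (2 * sin (ν * π) / π) := by
  have him' : (-ν).im ≠ 0 := by simpa using him
  set E := exp (-(I * π * ν))
  set d := (I * sin (ν * π))⁻¹ with hd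
  have h₁ : hankel1 ν = fun y => d * besselJ (-ν) y + (-E * d) * besselJ ν y := by
    funext y
    rw [hankel1, hd]
    ring
  have h₂ : (fun y => conj (hankel1 ν y)) =
      fun y => (-E * d) * besselJ (-ν) y + d * besselJ ν y := by
    funext y
    rw [conj_hankel1 hre y, hd]
    ring
  rw [h₂, h₁, wronskian_mul_add_mul (hasDerivAt_besselJ him' hx).differentiableAt
    (hasDerivAt_besselJ him hx).differentiableAt]
  have hW := wronskian_besselJ him' hx
  rw [neg_neg, mul_neg, sin_neg, mul_comm (π : ℂ)] at hW
  calc _ = (d * d - -E * d * (-E * d)) * (x * wronskian (besselJ (-ν)) (besselJ ν) x) := by ring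
    _ = _ := by
      rw [hW, hd]
      ring

theorem wronskian_hankel1_conj (μ : ℝ) (hμ : μ ≠ 0) {x : ℝ} (hx : 0 < x) :
    x * wronskian (hankel1 (I * μ)) (fun y => conj (hankel1 (I * μ) y)) x =
      -4 * I * Real.exp (π * μ) / π := by
  set e : ℂ := ↑(Real.exp (π * μ)) with he
  have he0 : e ≠ 0 := by rw [he]; exact_mod_cast (Real.exp_pos _).ne'
  have he1 : e ^ 2 - 1 ≠ 0 := by
    have h : Real.exp (π * μ) ≠ 1 := by
      rw [Ne, Real.exp_eq_one_iff]
      exact mul_ne_zero Real.pi_ne_zero hμ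
    rw [he, sub_ne_zero]
    exact_mod_cast (pow_eq_one_iff_of_nonneg (Real.exp_pos _).le two_ne_zero).not.mpr h
  have hνπ : I * μ * π * I = -↑(π * μ) := by
    push_cast
    linear_combination (π * μ : ℂ) * I_sq
  have hE : exp (-(I * π * (I * μ))) = e := by
    rw [he, ofReal_exp, ← neg_neg (↑(π * μ) : ℂ), ← hνπ]
    ring_nf
  have hsin : sin (I * μ * π) = (e - e⁻¹) * I / 2 := by
    rw [Complex.sin, neg_mul, hνπ, neg_neg, he, ofReal_exp, exp_neg]
  rw [wronskian_hankel1_conj_of_re_eq_zero (by simp) (by simpa using hμ) hx, hE, hsin]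
  field_simp
  linear_combination (4 - 4 * e ^ 2) * (1 - I ^ 2) * I_sq

def modePrefactor (μ t : ℝ) : ℂ :=
  (Real.exp (-(μ * π / 2)) : ℂ) * ((t ^ ((3 : ℝ) / 2) : ℝ) : ℂ)

theorem modeV_eq (m R t k : ℝ) :
    modeV m R t k = modePrefactor (modeMu m R) t * hankel1 (I * modeMu m R) (k * t) := rfl

theorem conj_modeV (m R t k : ℝ) :
    conj (modeV m R t k) =
      modePrefactor (modeMu m R) t * conj (hankel1 (I * modeMu m R) (k * t)) := by
  simp only [modeV_eq, modePrefactor, map_mul, conj_ofReal]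

theorem differentiableAt_modePrefactor (μ : ℝ) {t : ℝ} (ht : 0 < t) :
    DifferentiableAt ℝ (modePrefactor μ) t := by
  unfold modePrefactor
  fun_prop (disch := positivity)

theorem modePrefactor_sq (μ : ℝ) {t : ℝ} (ht : 0 < t) :
    modePrefactor μ t ^ 2 = Real.exp (-(π * μ)) * t ^ 3 := by
  have hpow : (t ^ ((3 : ℝ) / 2)) ^ 2 = t ^ 3 := by
    rw [← Real.rpow_natCast, ← Real.rpow_mul ht.le]
    norm_num
  have hexp : Real.exp (-(μ * π / 2)) ^ 2 = Real.exp (-(π * μ)) := by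
    rw [← Real.exp_nat_mul]
    ring_nf
  rw [modePrefactor, mul_pow, ← ofReal_pow, ← ofReal_pow, hpow, hexp]
  push_cast
  rfl

theorem wronskian_mode_function_general (m R : ℝ) (hmR : 3 / 2 < m * R)
    (t k : ℝ) (ht : 0 < t) (hk : 0 < k) :
    modeV m R t k * deriv (fun s => (starRingEnd ℂ) (modeV m R s k)) t -
        (starRingEnd ℂ) (modeV m R t k) * deriv (fun s => modeV m R s k) t =
      -(4 * Complex.I / (Real.pi : ℂ)) * (t : ℂ) ^ 2 := by
  change wronskian (fun s => modeV m R s k) (fun s => conj (modeV m R s k)) t = _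
  simp only [conj_modeV]
  simp only [modeV_eq]
  set μ := modeMu m R
  set h := hankel1 (I * μ)
  have hμ : μ ≠ 0 := (Real.sqrt_pos.mpr (by nlinarith)).ne'
  have hh : DifferentiableAt ℝ h (k * t) :=
    differentiableAt_hankel1 (by simpa using hμ) (mul_pos hk ht)
  have hf : DifferentiableAt ℝ (fun s => h (k * s)) t := hh.comp t (by fun_prop)
  have hg : DifferentiableAt ℝ (fun s => conj (h (k * s))) t := hh.star.comp t (by fun_prop)
  have hW : ((k * t : ℝ) : ℂ) * wronskian h (fun y => conj (h y)) (k * t) =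
      -4 * I * Real.exp (π * μ) / π := wronskian_hankel1_conj μ hμ (mul_pos hk ht)
  rw [wronskian_mul_left (differentiableAt_modePrefactor μ ht) hf hg,
    wronskian_comp_mul_left h (fun y => conj (h y)), modePrefactor_sq μ ht]
  have hexp : (Real.exp (-(π * μ)) : ℂ) * Real.exp (π * μ) = 1 := by
    rw [← ofReal_mul, ← Real.exp_add, neg_add_cancel, Real.exp_zero, ofReal_one]
  rw [ofReal_mul] at hW
  linear_combination (Real.exp (-(π * μ)) * t ^ 2 : ℂ) * hW + (-4 * I * t ^ 2 / π) * hexp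

/-- the Wronskian of the mode function and its conjugate equals
`−(4i/π)·t²`; in particular it is independent of `k`. -/
theorem wronskian_mode_function (m R : ℝ) (hm : 0 < m) (hR : 0 < R) (hmR : 3 / 2 < m * R)
    (t k : ℝ) (ht : 0 < t) (hk : 0 < k) :
    modeV m R t k * deriv (fun s => (starRingEnd ℂ) (modeV m R s k)) t -
        (starRingEnd ℂ) (modeV m R t k) * deriv (fun s => modeV m R s k) t =
      -(4 * Complex.I / (Real.pi : ℂ)) * (t : ℂ) ^ 2 :=
  wronskian_mode_function_general m R hmR t k ht hk
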